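/- Let H and H' be probability measures on [0,1]² with cumulative distribution functions H(x,y) = H([0,x]×[0,y]) and H'(x,y) = H'([0,x]×[0,y]), and let a : [0,1] → [0,1] be a continuous strictly increasing bijection with inverse a⁻. Then | ∫_{[0,1]²} (1/2)·|a(u1) − a⁻(u2)| dH − ∫_{[0,1]²} (1/2)·|a(u1) − a⁻(u2)| dH' | ≤ 2·sup_{(x,y) ∈ [0,1]²} |H(x,y) − H'(x,y)|. -/

import Mathlib

open MeasureTheory

/-- The bivariate cumulative distribution function `H(x, y) = H([0,x] × [0,y])`
of a measure on the unit square. -/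
noncomputable def cdf2 (μ : Measure (ℝ × ℝ)) (x y : ℝ) : ℝ :=
  (μ (Set.Icc 0 x ×ˢ Set.Icc 0 y)).toReal

/-!
For `x, y ∈ [0,1]`, `|x - y|` is the length of the set of levels `t ∈ [0,1]` with
`x ≤ t` xor `y ≤ t`, so by Fubini `∫ |a u₁ - a⁻ u₂| dH = ∫₀¹ H(S_t) dt` with
`S_t = {a u₁ ≤ t} ∆ {a⁻ u₂ ≤ t}`. Since `a u₁ ≤ t ↔ u₁ ≤ a⁻ t` and `a⁻ u₂ ≤ t ↔ u₂ ≤ a t`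
on `[0,1]`, inclusion–exclusion gives `H(S_t) = H(a⁻ t, 1) + H(1, a t) - 2 H(a⁻ t, a t)`,
which changes by at most `4 sup |H - H'|` when `H` is replaced by `H'`.
-/

open Set
open scoped symmDiff

section RightInvOn

variable {α β : Type*} [LinearOrder α] [Preorder β] {f : α → β} {g : β → α} {s : Set α}
  {t : Set β}

theorem StrictMonoOn.apply_le_iff_le_of_rightInvOn (hf : StrictMonoOn f s) (hg : MapsTo g t s)
    (hfg : RightInvOn g f t) {u : α} {v : β} (hu : u ∈ s) (hv : v ∈ t) :
    f u ≤ v ↔ u ≤ g v := by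
  conv_lhs => rw [← hfg hv]
  exact hf.le_iff_le hu (hg hv)

theorem StrictMonoOn.le_apply_iff_of_rightInvOn (hf : StrictMonoOn f s) (hg : MapsTo g t s)
    (hfg : RightInvOn g f t) {u : α} {v : β} (hu : u ∈ s) (hv : v ∈ t) :
    g v ≤ u ↔ v ≤ f u := by
  conv_rhs => rw [← hfg hv]
  exact (hf.le_iff_le (hg hv) hu).symm

theorem StrictMonoOn.monotoneOn_of_rightInvOn (hf : StrictMonoOn f s) (hg : MapsTo g t s)
    (hfg : RightInvOn g f t) : MonotoneOn g t := fun u hu v hv huv =>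
  (hf.le_apply_iff_of_rightInvOn hg hfg (hg hv) hu).2 (by rwa [hfg hv])

end RightInvOn

theorem Real.volume_real_Ici_symmDiff_Ici_inter_Icc {c d x y : ℝ} (hx : x ∈ Icc c d)
    (hy : y ∈ Icc c d) : volume.real (Ici x ∆ Ici y ∩ Icc c d) = |x - y| := by
  wlog hxy : x ≤ y generalizing x y
  · rw [symmDiff_comm, abs_sub_comm]
    exact this hy hx (le_of_not_ge hxy)
  rw [symmDiff_of_ge (Ici_subset_Ici.2 hxy), Ici_sdiff_Ici,
    inter_eq_left.2 (Ico_subset_Icc_self.trans (Icc_subset_Icc hx.1 hy.2)),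
    Real.volume_real_Ico_of_le hxy, abs_sub_comm, abs_of_nonneg (sub_nonneg.2 hxy)]

theorem measureReal_symmDiff_eq_add_sub_inter {α : Type*} [MeasurableSpace α] {μ : Measure α}
    [IsFiniteMeasure μ] {s t : Set α} (hs : MeasurableSet s) (ht : MeasurableSet t) :
    μ.real (s ∆ t) = μ.real s + μ.real t - 2 * μ.real (s ∩ t) := by
  have hst := measureReal_inter_add_sdiff (μ := μ) (s := s) ht
  have hts := measureReal_inter_add_sdiff (μ := μ) (s := t) hs
  rw [inter_comm] at hts
  rw [measureReal_symmDiff_eq hs ht]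
  linarith

section LayerCake

variable {Ω : Type*} [MeasurableSpace Ω] {m : Measure Ω} [IsFiniteMeasure m] {X Y : Ω → ℝ}

theorem measurableSet_le_symmDiff_le (hX : Measurable X) (hY : Measurable Y) :
    MeasurableSet ({q : Ω × ℝ | X q.1 ≤ q.2} ∆ {q | Y q.1 ≤ q.2}) :=
  (measurableSet_le (hX.comp measurable_fst) measurable_snd).symmDiff
    (measurableSet_le (hY.comp measurable_fst) measurable_snd)

theorem integrable_measureReal_le_symmDiff_le (hX : Measurable X) (hY : Measurable Y)
    (ν : Measure ℝ) [IsFiniteMeasure ν] :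
    Integrable (fun t => m.real ({ω | X ω ≤ t} ∆ {ω | Y ω ≤ t})) ν :=
  .of_bound (measurable_measure_prodMk_right
      (measurableSet_le_symmDiff_le hX hY)).ennreal_toReal.aestronglyMeasurable
    (m.real univ) (ae_of_all _ fun _ => by
      rw [Real.norm_of_nonneg measureReal_nonneg]
      exact measureReal_mono (subset_univ _))

theorem integral_abs_sub_eq_integral_measureReal_le_symmDiff_le (hX : Measurable X)
    (hY : Measurable Y) {c d : ℝ} (hXcd : ∀ᵐ ω ∂m, X ω ∈ Icc c d) (hYcd : ∀ᵐ ω ∂m, Y ω ∈ Icc c d) :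
    ∫ ω, |X ω - Y ω| ∂m = ∫ t in Icc c d, m.real ({ω | X ω ≤ t} ∆ {ω | Y ω ≤ t}) := by
  set E := {q : Ω × ℝ | X q.1 ≤ q.2} ∆ {q | Y q.1 ≤ q.2}
  have hint : Integrable (E.indicator (1 : Ω × ℝ → ℝ)) (m.prod (volume.restrict (Icc c d))) :=
    (integrable_const 1).indicator (measurableSet_le_symmDiff_le hX hY)
  calc ∫ ω, |X ω - Y ω| ∂m = ∫ ω, (∫ t in Icc c d, E.indicator (1 : Ω × ℝ → ℝ) (ω, t)) ∂m := by
        refine integral_congr_ae ?_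
        filter_upwards [hXcd, hYcd] with ω hx hy
        rw [← Real.volume_real_Ici_symmDiff_Ici_inter_Icc hx hy, ← measureReal_restrict_apply
          (measurableSet_Ici.symmDiff measurableSet_Ici), ← integral_indicator_one
          (measurableSet_Ici.symmDiff measurableSet_Ici)]
        rfl
    _ = ∫ t in Icc c d, ∫ ω, E.indicator (1 : Ω × ℝ → ℝ) (ω, t) ∂m := integral_integral_swap hint
    _ = ∫ t in Icc c d, m.real ({ω | X ω ≤ t} ∆ {ω | Y ω ≤ t}) := by
        congr with t
        rw [← integral_indicator_one ((measurableSet_le hX measurable_const).symmDiff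
          (measurableSet_le hY measurable_const))]
        rfl

end LayerCake

noncomputable def cdf2Dist (μ ν : Measure (ℝ × ℝ)) : ℝ :=
  sSup ((fun p : ℝ × ℝ => |cdf2 μ p.1 p.2 - cdf2 ν p.1 p.2|) '' (Icc (0 : ℝ) 1 ×ˢ Icc (0 : ℝ) 1))

theorem cdf2_mem_Icc (μ : Measure (ℝ × ℝ)) [IsProbabilityMeasure μ] (x y : ℝ) :
    cdf2 μ x y ∈ Icc (0 : ℝ) 1 :=
  ⟨measureReal_nonneg, measureReal_le_one⟩

theorem abs_cdf2_sub_le_cdf2Dist (μ ν : Measure (ℝ × ℝ)) [IsProbabilityMeasure μ]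
    [IsProbabilityMeasure ν] {x y : ℝ} (hx : x ∈ Icc (0 : ℝ) 1) (hy : y ∈ Icc (0 : ℝ) 1) :
    |cdf2 μ x y - cdf2 ν x y| ≤ cdf2Dist μ ν := by
  refine le_csSup ⟨1, ?_⟩ ⟨(x, y), ⟨hx, hy⟩, rfl⟩
  rintro _ ⟨p, -, rfl⟩
  have hμ := cdf2_mem_Icc μ p.1 p.2
  have hν := cdf2_mem_Icc ν p.1 p.2
  exact abs_sub_le_of_nonneg_of_le hμ.1 hμ.2 hν.1 hν.2

theorem measureReal_eq_cdf2_of_ae_mem {H : Measure (ℝ × ℝ)}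
    (hH : ∀ᵐ p ∂H, p ∈ Icc (0 : ℝ) 1 ×ˢ Icc (0 : ℝ) 1) {s : Set (ℝ × ℝ)} {x y : ℝ}
    (hs : ∀ p ∈ Icc (0 : ℝ) 1 ×ˢ Icc (0 : ℝ) 1, p ∈ s ↔ p.1 ≤ x ∧ p.2 ≤ y) :
    H.real s = cdf2 H x y := by
  refine measureReal_congr (Filter.eventuallyEq_set.2 ?_)
  filter_upwards [hH] with p hp
  simp only [hs p hp, mem_prod, mem_Icc, hp.1.1, hp.2.1, true_and]

section UnitSquare

variable {μ ν : Measure (ℝ × ℝ)} {a b : ℝ → ℝ}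

theorem measureReal_symmDiff_eq_cdf2 [IsFiniteMeasure μ]
    (hμ : ∀ᵐ p ∂μ, p ∈ Icc (0 : ℝ) 1 ×ˢ Icc (0 : ℝ) 1)
    (ha : Measurable a) (hb : Measurable b) (ha_mono : StrictMonoOn a (Icc 0 1))
    (hb_maps : MapsTo b (Icc 0 1) (Icc 0 1)) (hab : RightInvOn b a (Icc 0 1))
    {t : ℝ} (ht : t ∈ Icc (0 : ℝ) 1) :
    μ.real ({p : ℝ × ℝ | a p.1 ≤ t} ∆ {p | b p.2 ≤ t})
      = cdf2 μ (b t) 1 + cdf2 μ 1 (a t) - 2 * cdf2 μ (b t) (a t) := by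
  have hle_a : ∀ u ∈ Icc (0 : ℝ) 1, a u ≤ t ↔ u ≤ b t := fun u hu =>
    ha_mono.apply_le_iff_le_of_rightInvOn hb_maps hab hu ht
  have hle_b : ∀ u ∈ Icc (0 : ℝ) 1, b u ≤ t ↔ u ≤ a t := fun u hu =>
    ha_mono.le_apply_iff_of_rightInvOn hb_maps hab ht hu
  rw [measureReal_symmDiff_eq_add_sub_inter (measurableSet_le (by fun_prop) measurable_const)
      (measurableSet_le (by fun_prop) measurable_const),
    measureReal_eq_cdf2_of_ae_mem hμ (x := b t) (y := 1) fun p hp => by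
      simp [hle_a p.1 hp.1, hp.2.2],
    measureReal_eq_cdf2_of_ae_mem hμ (x := 1) (y := a t) fun p hp => by
      simp [hle_b p.2 hp.2, hp.1.2],
    measureReal_eq_cdf2_of_ae_mem hμ (x := b t) (y := a t) fun p hp => by
      simp [hle_a p.1 hp.1, hle_b p.2 hp.2]]

theorem abs_measureReal_symmDiff_sub_le_cdf2Dist [IsProbabilityMeasure μ] [IsProbabilityMeasure ν]
    (hμ : ∀ᵐ p ∂μ, p ∈ Icc (0 : ℝ) 1 ×ˢ Icc (0 : ℝ) 1)
    (hν : ∀ᵐ p ∂ν, p ∈ Icc (0 : ℝ) 1 ×ˢ Icc (0 : ℝ) 1)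
    (ha : Measurable a) (hb : Measurable b) (ha_mono : StrictMonoOn a (Icc 0 1))
    (ha_maps : MapsTo a (Icc 0 1) (Icc 0 1)) (hb_maps : MapsTo b (Icc 0 1) (Icc 0 1))
    (hab : RightInvOn b a (Icc 0 1)) {t : ℝ} (ht : t ∈ Icc (0 : ℝ) 1) :
    |μ.real ({p : ℝ × ℝ | a p.1 ≤ t} ∆ {p | b p.2 ≤ t})
      - ν.real ({p : ℝ × ℝ | a p.1 ≤ t} ∆ {p | b p.2 ≤ t})| ≤ 4 * cdf2Dist μ ν := by
  have h01 : (1 : ℝ) ∈ Icc (0 : ℝ) 1 := right_mem_Icc.2 zero_le_one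
  have h₁ := abs_le.1 (abs_cdf2_sub_le_cdf2Dist μ ν (hb_maps ht) h01)
  have h₂ := abs_le.1 (abs_cdf2_sub_le_cdf2Dist μ ν h01 (ha_maps ht))
  have h₃ := abs_le.1 (abs_cdf2_sub_le_cdf2Dist μ ν (hb_maps ht) (ha_maps ht))
  rw [measureReal_symmDiff_eq_cdf2 hμ ha hb ha_mono hb_maps hab ht,
    measureReal_symmDiff_eq_cdf2 hν ha hb ha_mono hb_maps hab ht, abs_le]
  constructor <;> linarith [h₁.1, h₁.2, h₂.1, h₂.2, h₃.1, h₃.2]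

theorem abs_integral_abs_sub_sub_le_cdf2Dist [IsProbabilityMeasure μ] [IsProbabilityMeasure ν]
    (hμ : ∀ᵐ p ∂μ, p ∈ Icc (0 : ℝ) 1 ×ˢ Icc (0 : ℝ) 1)
    (hν : ∀ᵐ p ∂ν, p ∈ Icc (0 : ℝ) 1 ×ˢ Icc (0 : ℝ) 1)
    (ha : Measurable a) (hb : Measurable b) (ha_mono : StrictMonoOn a (Icc 0 1))
    (ha_maps : MapsTo a (Icc 0 1) (Icc 0 1)) (hb_maps : MapsTo b (Icc 0 1) (Icc 0 1))
    (hab : RightInvOn b a (Icc 0 1)) :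
    |∫ p, |a p.1 - b p.2| ∂μ - ∫ p, |a p.1 - b p.2| ∂ν| ≤ 4 * cdf2Dist μ ν := by
  have hX : Measurable fun p : ℝ × ℝ => a p.1 := ha.comp measurable_fst
  have hY : Measurable fun p : ℝ × ℝ => b p.2 := hb.comp measurable_snd
  have hlayer : ∀ H : Measure (ℝ × ℝ), [IsFiniteMeasure H] →
      (∀ᵐ p ∂H, p ∈ Icc (0 : ℝ) 1 ×ˢ Icc (0 : ℝ) 1) → ∫ p, |a p.1 - b p.2| ∂H
        = ∫ t in Icc 0 1, H.real ({p : ℝ × ℝ | a p.1 ≤ t} ∆ {p | b p.2 ≤ t}) := fun H _ hH =>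
    integral_abs_sub_eq_integral_measureReal_le_symmDiff_le hX hY
      (hH.mono fun _ hp => ha_maps hp.1) (hH.mono fun _ hp => hb_maps hp.2)
  rw [hlayer μ hμ, hlayer ν hν, ← integral_sub (integrable_measureReal_le_symmDiff_le hX hY _)
    (integrable_measureReal_le_symmDiff_le hX hY _), ← Real.norm_eq_abs]
  calc _ ≤ 4 * cdf2Dist μ ν * volume.real (Icc (0 : ℝ) 1) :=
        norm_setIntegral_le_of_norm_le_const measure_Icc_lt_top fun t ht =>
          abs_measureReal_symmDiff_sub_le_cdf2Dist hμ hν ha hb ha_mono ha_maps hb_maps hab ht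
    _ = 4 * cdf2Dist μ ν := by rw [Real.volume_real_Icc_of_le zero_le_one, sub_zero, mul_one]

end UnitSquare

theorem integral_diff_le_sup_cdf_diff_general
    (μ ν : Measure (ℝ × ℝ)) [IsProbabilityMeasure μ] [IsProbabilityMeasure ν]
    (hμsupp : ∀ᵐ p ∂μ, p ∈ Set.Icc (0 : ℝ) 1 ×ˢ Set.Icc (0 : ℝ) 1)
    (hνsupp : ∀ᵐ p ∂ν, p ∈ Set.Icc (0 : ℝ) 1 ×ˢ Set.Icc (0 : ℝ) 1)
    (a ainv : ℝ → ℝ)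
    (ha_mono : StrictMonoOn a (Set.Icc 0 1))
    (ha_maps : Set.MapsTo a (Set.Icc 0 1) (Set.Icc 0 1))
    (hainv_maps : Set.MapsTo ainv (Set.Icc 0 1) (Set.Icc 0 1))
    (h_right : ∀ u ∈ Set.Icc (0 : ℝ) 1, a (ainv u) = u) :
    |(∫ p, (1 / 2) * |a p.1 - ainv p.2| ∂μ) - ∫ p, (1 / 2) * |a p.1 - ainv p.2| ∂ν|
      ≤ 2 * sSup ((fun p : ℝ × ℝ => |cdf2 μ p.1 p.2 - cdf2 ν p.1 p.2|) ''
          (Set.Icc (0 : ℝ) 1 ×ˢ Set.Icc (0 : ℝ) 1)) := by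
  -- Nothing makes `a` and `ainv` measurable on `ℝ`; monotone extensions of their
  -- restrictions to `[0,1]` are.
  obtain ⟨A, hA, hAa⟩ := ha_mono.monotoneOn.exists_monotone_extension
    (bddBelow_Icc.mono ha_maps.image_subset) (bddAbove_Icc.mono ha_maps.image_subset)
  obtain ⟨B, hB, hBb⟩ := (ha_mono.monotoneOn_of_rightInvOn hainv_maps h_right)
    |>.exists_monotone_extension (bddBelow_Icc.mono hainv_maps.image_subset) (bddAbove_Icc.mono hainv_maps.image_subset)
  have hAB : RightInvOn B A (Icc 0 1) := fun u hu => by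
    rw [← hBb hu, ← hAa (hainv_maps hu), h_right u hu]
  have hextend : ∀ H : Measure (ℝ × ℝ), (∀ᵐ p ∂H, p ∈ Icc (0 : ℝ) 1 ×ˢ Icc (0 : ℝ) 1) →
      ∫ p, (1 / 2) * |a p.1 - ainv p.2| ∂H = (1 / 2) * ∫ p, |A p.1 - B p.2| ∂H := fun H hH => by
    rw [← integral_const_mul]
    refine integral_congr_ae (hH.mono fun p hp => ?_)
    simp only [hAa hp.1, hBb hp.2]
  have hbound := abs_integral_abs_sub_sub_le_cdf2Dist hμsupp hνsupp hA.measurable hB.measurable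
    (ha_mono.congr hAa) (ha_maps.congr hAa) (hainv_maps.congr hBb) hAB
  rw [hextend μ hμsupp, hextend ν hνsupp, ← mul_sub, abs_mul, abs_of_pos one_half_pos]
  unfold cdf2Dist at hbound
  linarith

/-- For two probability measures `H`, `H'` on `[0,1]²` and a continuous
strictly increasing bijection `a : [0,1] → [0,1]` with inverse `a⁻`,
`|∫ (1/2)|a(u1) − a⁻(u2)| dH − ∫ (1/2)|a(u1) − a⁻(u2)| dH'| ≤ 2·sup_{(x,y)} |H(x,y) − H'(x,y)|`. -/
theorem integral_diff_le_sup_cdf_diff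
    (μ ν : Measure (ℝ × ℝ)) [IsProbabilityMeasure μ] [IsProbabilityMeasure ν]
    (hμsupp : ∀ᵐ p ∂μ, p ∈ Set.Icc (0 : ℝ) 1 ×ˢ Set.Icc (0 : ℝ) 1)
    (hνsupp : ∀ᵐ p ∂ν, p ∈ Set.Icc (0 : ℝ) 1 ×ˢ Set.Icc (0 : ℝ) 1)
    (a ainv : ℝ → ℝ)
    (ha_cont : ContinuousOn a (Set.Icc 0 1))
    (ha_mono : StrictMonoOn a (Set.Icc 0 1))
    (ha0 : a 0 = 0) (ha1 : a 1 = 1)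
    (ha_maps : Set.MapsTo a (Set.Icc 0 1) (Set.Icc 0 1))
    (hainv_maps : Set.MapsTo ainv (Set.Icc 0 1) (Set.Icc 0 1))
    (h_left : ∀ u ∈ Set.Icc (0 : ℝ) 1, ainv (a u) = u)
    (h_right : ∀ u ∈ Set.Icc (0 : ℝ) 1, a (ainv u) = u) :
    |(∫ p, (1 / 2) * |a p.1 - ainv p.2| ∂μ) - ∫ p, (1 / 2) * |a p.1 - ainv p.2| ∂ν|
      ≤ 2 * sSup ((fun p : ℝ × ℝ => |cdf2 μ p.1 p.2 - cdf2 ν p.1 p.2|) ''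
          (Set.Icc (0 : ℝ) 1 ×ˢ Set.Icc (0 : ℝ) 1)) :=
  integral_diff_le_sup_cdf_diff_general μ ν hμsupp hνsupp a ainv ha_mono ha_maps hainv_maps h_right
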